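/- Let ρ be any 2×2 complex matrix and w_ρ(m,α,β) = Tr(ρ · U(m,α,β)) its qubit tomogram. Define the kernel K_x(m,α,β; m',α',β') = (1/2)·δ_{m m'}·(1 + 3 cos α sin β cos α' sin β' − 3 sin α sin β sin α' sin β' − 3 cos β cos β'). Then for all m ∈ {−1/2,1/2} and real α, β: Σ_{m' ∈ {−1/2,1/2}} (1/(2π)) ∫₀^{2π} ∫₀^{π} K_x(m,α,β; m',α',β') · w_ρ(m',α',β') · sin β' dβ' dα' = Tr(σ_x ρ σ_x · U(m,α,β)). -/

import Mathlib

open Matrix Real MeasureTheory intervalIntegral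

noncomputable def sigmaX : Matrix (Fin 2) (Fin 2) ℂ := !![0, 1; 1, 0]
noncomputable def sigmaY : Matrix (Fin 2) (Fin 2) ℂ := !![0, -Complex.I; Complex.I, 0]
noncomputable def sigmaZ : Matrix (Fin 2) (Fin 2) ℂ := !![1, 0; 0, -1]

/-- The qubit de-quantizer U(m, α, β). -/
noncomputable def dequantizer (m α β : ℝ) : Matrix (Fin 2) (Fin 2) ℂ :=
  (1/2 : ℂ) • (1 : Matrix (Fin 2) (Fin 2) ℂ)
    - ((m * Real.cos α * Real.sin β : ℝ) : ℂ) • sigmaX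
    - ((m * Real.sin α * Real.sin β : ℝ) : ℂ) • sigmaY
    + ((m * Real.cos β : ℝ) : ℂ) • sigmaZ

/-- The qubit tomogram of a 2×2 complex matrix ρ. -/
noncomputable def tomogram (ρ : Matrix (Fin 2) (Fin 2) ℂ) (m α β : ℝ) : ℂ :=
  (ρ * dequantizer m α β).trace

/-- The tomographic kernel of the channel ρ ↦ sigmaX ρ sigmaX. -/
noncomputable def kernelX (m α β m' α' β' : ℝ) : ℝ :=
  (1/2) * (if m = m' then (1:ℝ) else 0) *
    (1 + 3 * Real.cos α * Real.sin β * Real.cos α' * Real.sin β'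
      - 3 * Real.sin α * Real.sin β * Real.sin α' * Real.sin β'
      - 3 * Real.cos β * Real.cos β')

/-!
In Bloch form the tomogram is affine in the direction `n = (cos α sin β, sin α sin β, cos β)`:
`w_ρ(m, n) = Tr ρ / 2 + m ⟨r, n⟩`. Over the unit sphere `∫ 1 = 4π`, `∫ n = 0` and
`∫ n nᵀ = (4π / 3) I`, so averaging against the kernel `(1 + 3 ⟨v, n'⟩) / 2` reproduces the value
at `v` of any affine function of `n'`. Conjugation by `σ_x` maps `U(m, α, β)` to
`U(m, -α, π - β)`, and `K_x` is exactly the reproducing kernel at the direction `n(-α, π - β)`.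
-/

theorem integral_two_pi_trig_quadratic (c₀ c₁ c₂ a b e f : ℂ) :
    ∫ x in (0:ℝ)..(2 * π), (c₀ + c₁ * cos x + c₂ * sin x
        + (a * cos x + b * sin x) * (e * cos x + f * sin x) : ℂ)
      = 2 * π * c₀ + π * (a * e + b * f) := by
  have hexpand : ∀ x : ℝ, (c₀ + c₁ * cos x + c₂ * sin x
        + (a * cos x + b * sin x) * (e * cos x + f * sin x) : ℂ)
      = c₀ + c₁ * ↑(cos x) + c₂ * ↑(sin x) + a * e * ↑(cos x ^ 2)
        + (a * f + b * e) * ↑(sin x * cos x) + b * f * ↑(sin x ^ 2) := by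
    intro x
    push_cast
    ring
  simp (disch := apply Continuous.intervalIntegrable; fun_prop) only [hexpand,
    intervalIntegral.integral_add, intervalIntegral.integral_const_mul,
    intervalIntegral.integral_ofReal, intervalIntegral.integral_const, integral_cos, integral_sin,
    integral_cos_sq, integral_sin_sq, integral_sin_mul_cos₁]
  simp
  ring

theorem integral_pi_trig_quadratic_mul_sin (c₀ c₁ c₂ a b e f : ℂ) :
    ∫ x in (0:ℝ)..π, (c₀ + c₁ * sin x + c₂ * cos x
        + (a * sin x + b * cos x) * (e * sin x + f * cos x)) * sin x
      = 2 * c₀ + π / 2 * c₁ + 4 / 3 * (a * e) + 2 / 3 * (b * f) := by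
  have hexpand : ∀ x : ℝ, (c₀ + c₁ * sin x + c₂ * cos x
        + (a * sin x + b * cos x) * (e * sin x + f * cos x)) * sin x
      = c₀ * ↑(sin x) + c₁ * ↑(sin x ^ 2) + c₂ * ↑(sin x * cos x) + a * e * ↑(sin x ^ 3)
        + (a * f + b * e) * ↑(sin x ^ 2 * cos x) + b * f * ↑(sin x * cos x ^ 2) := by
    intro x
    push_cast
    ring
  simp (disch := apply Continuous.intervalIntegrable; fun_prop) only [hexpand,
    intervalIntegral.integral_add, intervalIntegral.integral_const_mul,
    intervalIntegral.integral_ofReal, integral_sin, integral_sin_sq, integral_sin_mul_cos₁,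
    integral_sin_pow_three, integral_sin_sq_mul_cos, integral_sin_mul_cos_sq]
  simp
  ring

noncomputable def sphericalUnitVec (α β : ℝ) : Fin 3 → ℝ :=
  ![cos α * sin β, sin α * sin β, cos β]

theorem integral_sphere_affine_mul_affine (p c : ℂ) (q d : Fin 3 → ℂ) :
    ∫ α in (0:ℝ)..(2 * π), ∫ β in (0:ℝ)..π,
        (p + ∑ i, q i * sphericalUnitVec α β i) * (c + ∑ i, d i * sphericalUnitVec α β i) * sin β
      = 4 * π * (p * c + (∑ i, q i * d i) / 3) := by
  have hinner : ∀ α : ℝ, ∫ β in (0:ℝ)..π,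
        (p + ∑ i, q i * sphericalUnitVec α β i) * (c + ∑ i, d i * sphericalUnitVec α β i) * sin β
      = 2 * (p * c) + 2 / 3 * (q 2 * d 2) + π / 2 * (p * d 0 + c * q 0) * cos α
        + π / 2 * (p * d 1 + c * q 1) * sin α
        + (4 / 3 * q 0 * cos α + 4 / 3 * q 1 * sin α) * (d 0 * cos α + d 1 * sin α) := by
    intro α
    rw [intervalIntegral.integral_congr (g := fun β : ℝ ↦
        (p * c + (p * (d 0 * cos α + d 1 * sin α) + c * (q 0 * cos α + q 1 * sin α)) * sin β
          + (p * d 2 + c * q 2) * cos β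
          + ((q 0 * cos α + q 1 * sin α) * sin β + q 2 * cos β)
            * ((d 0 * cos α + d 1 * sin α) * sin β + d 2 * cos β)) * sin β)
        fun β _ ↦ by simp only [Fin.sum_univ_three, sphericalUnitVec]; push_cast; ring,
      integral_pi_trig_quadratic_mul_sin]
    ring
  simp only [hinner]
  rw [integral_two_pi_trig_quadratic]
  simp only [Fin.sum_univ_three]
  ring

noncomputable def pauliAxis : Fin 3 → Matrix (Fin 2) (Fin 2) ℂ := ![-sigmaX, -sigmaY, sigmaZ]

theorem tomogram_eq (ρ : Matrix (Fin 2) (Fin 2) ℂ) (m α β : ℝ) :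
    tomogram ρ m α β
      = ρ.trace / 2 + ∑ i, m * (ρ * pauliAxis i).trace * sphericalUnitVec α β i := by
  simp [tomogram, dequantizer, pauliAxis, sphericalUnitVec, Fin.sum_univ_three, Matrix.mul_add,
    Matrix.mul_sub, Matrix.trace_add, Matrix.trace_sub, Matrix.trace_smul]
  ring

theorem tomogram_reproducing (ρ : Matrix (Fin 2) (Fin 2) ℂ) (m α β : ℝ) :
    (1 / (2 * (π : ℂ))) *
        ∫ α' in (0:ℝ)..(2 * π), ∫ β' in (0:ℝ)..π,
          (1 / 2 + ∑ i, 3 / 2 * (sphericalUnitVec α β i : ℂ) * sphericalUnitVec α' β' i)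
            * tomogram ρ m α' β' * (sin β' : ℂ)
      = tomogram ρ m α β := by
  simp only [tomogram_eq]
  rw [integral_sphere_affine_mul_affine]
  have hπ : (π : ℂ) ≠ 0 := Complex.ofReal_ne_zero.mpr pi_ne_zero
  simp only [Fin.sum_univ_three]
  field_simp
  ring

theorem sigmaX_mul_dequantizer_mul_sigmaX (m α β : ℝ) :
    sigmaX * dequantizer m α β * sigmaX = dequantizer m (-α) (π - β) := by
  ext i j
  fin_cases i <;> fin_cases j <;>
    simp [dequantizer, sigmaX, sigmaY, sigmaZ, Matrix.mul_apply, Fin.sum_univ_two, Matrix.vecMul,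
      dotProduct]

theorem trace_sigmaX_conj_mul_dequantizer (ρ : Matrix (Fin 2) (Fin 2) ℂ) (m α β : ℝ) :
    (sigmaX * ρ * sigmaX * dequantizer m α β).trace = tomogram ρ m (-α) (π - β) := by
  rw [tomogram, ← sigmaX_mul_dequantizer_mul_sigmaX]
  simp only [Matrix.mul_assoc]
  rw [Matrix.trace_mul_comm sigmaX]
  simp only [Matrix.mul_assoc]

theorem kernelX_of_ne {m m' : ℝ} (h : m ≠ m') (α β α' β' : ℝ) :
    kernelX m α β m' α' β' = 0 := by
  simp [kernelX, h]

theorem ofReal_kernelX_self (m α β α' β' : ℝ) :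
    (kernelX m α β m α' β' : ℂ)
      = 1 / 2 + ∑ i, 3 / 2 * (sphericalUnitVec (-α) (π - β) i : ℂ) * sphericalUnitVec α' β' i := by
  simp [kernelX, sphericalUnitVec, Fin.sum_univ_three]
  ring

theorem kernelX_represents (ρ : Matrix (Fin 2) (Fin 2) ℂ) :
    ∀ m : ℝ, m = -(1/2) ∨ m = 1/2 → ∀ α β : ℝ,
      (1 / (2 * (Real.pi : ℂ))) *
        ∫ α' in (0:ℝ)..(2 * Real.pi), ∫ β' in (0:ℝ)..Real.pi,
          ((kernelX m α β (1/2) α' β' : ℂ) * tomogram ρ (1/2) α' β'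
            + (kernelX m α β (-(1/2)) α' β' : ℂ) * tomogram ρ (-(1/2)) α' β')
          * (Real.sin β' : ℂ)
      = (sigmaX * ρ * sigmaX * dequantizer m α β).trace := by
  intro m hm α β
  have hcollapse : ∀ α' β' : ℝ,
      (kernelX m α β (1/2) α' β' : ℂ) * tomogram ρ (1/2) α' β'
        + (kernelX m α β (-(1/2)) α' β' : ℂ) * tomogram ρ (-(1/2)) α' β'
      = kernelX m α β m α' β' * tomogram ρ m α' β' := by
    rcases hm with rfl | rfl <;> intro α' β' <;> norm_num [kernelX_of_ne]
  simp only [hcollapse, ofReal_kernelX_self]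
  rw [tomogram_reproducing, trace_sigmaX_conj_mul_dequantizer]
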